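/- arXiv:2303.10078 — 3 statements merged into one kernel-verified Lean document; each statement's English description precedes it below -/
import Mathlib

section
/- Let C ≥ 2 and let p_2, …, p_C be strictly positive real numbers. Let v = (Σ_{i=2}^C p_i, p_2, …, p_C) ∈ ℝ^C and 𝟙 = (1, …, 1) ∈ ℝ^C. Then the angle between v and 𝟙 satisfies angle(v, 𝟙) ≥ arccos(2·√(C−1)/C), with equality if and only if p_2 = p_3 = … = p_C. -/
private lemma arccos_anti {x y : ℝ} (h : x ≤ y) : Real.arccos y ≤ Real.arccos x := by
  rw [Real.arccos_eq_pi_div_two_sub_arcsin, Real.arccos_eq_pi_div_two_sub_arcsin]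
  linarith [Real.monotone_arcsin h]

set_option maxHeartbeats 1000000 in
/-- Proposition 3 angle bound: the angle between
`v = (Σ_{i≠0} p_i, p_2, …, p_C)` and the all-ones vector `𝟙` in `ℝ^C` is at least
`arccos(2√(C−1)/C)`, with equality iff all the `p_i` (i ≥ 2) coincide. -/
theorem tce_gradient_angle_bound (C : ℕ) (hC : 2 ≤ C)
    (p : Fin C → ℝ) (hp : ∀ i : Fin C, i.val ≠ 0 → 0 < p i)
    (v ones : EuclideanSpace ℝ (Fin C))
    (hv : ∀ i : Fin C, v i =
      if i.val = 0 then ∑ j ∈ Finset.univ.filter (fun j : Fin C => j.val ≠ 0), p j else p i)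
    (hones : ∀ i : Fin C, ones i = 1) :
    Real.arccos (2 * Real.sqrt ((C : ℝ) - 1) / C) ≤ InnerProductGeometry.angle v ones ∧
    (InnerProductGeometry.angle v ones = Real.arccos (2 * Real.sqrt ((C : ℝ) - 1) / C) ↔
      ∀ i j : Fin C, i.val ≠ 0 → j.val ≠ 0 → p i = p j) := by
  classical
  set i0 : Fin C := ⟨0, by omega⟩ with hi0
  set s : Finset (Fin C) := Finset.univ.filter (fun j : Fin C => j.val ≠ 0) with hs
  have hmem : ∀ j : Fin C, j ∈ s ↔ j.val ≠ 0 := by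
    intro j; simp [hs]
  have hseq : s = Finset.univ.erase i0 := by
    ext j
    simp [hs, Fin.ext_iff, i0]
  have hcard : (s.card : ℝ) = (C : ℝ) - 1 := by
    rw [hseq, Finset.card_erase_of_mem (Finset.mem_univ _), Finset.card_univ, Fintype.card_fin,
      Nat.cast_sub (by omega : 1 ≤ C), Nat.cast_one]
  set n : ℝ := (C : ℝ) - 1 with hn
  have hn1 : (1 : ℝ) ≤ n := by
    have : (2 : ℝ) ≤ (C : ℝ) := by exact_mod_cast hC
    simp [hn]; linarith
  have hn0 : 0 < n := by linarith
  have hCpos : (0 : ℝ) < C := by positivity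
  set S : ℝ := ∑ j ∈ s, p j with hS
  set Q : ℝ := ∑ j ∈ s, (p j) ^ 2 with hQ
  have hsne : s.Nonempty := ⟨⟨1, by omega⟩, (hmem _).2 (by simp)⟩
  have hSpos : 0 < S := Finset.sum_pos (fun j hj => hp j ((hmem j).1 hj)) hsne
  have hQpos : 0 < Q := Finset.sum_pos (fun j hj => by
    have := hp j ((hmem j).1 hj); positivity) hsne
  have hsum_split : ∀ f : Fin C → ℝ, ∑ j, f j = f i0 + ∑ j ∈ s, f j := by
    intro f
    rw [hseq, Finset.add_sum_erase _ f (Finset.mem_univ i0)]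
  -- inner product
  have hinner : (inner ℝ v ones : ℝ) = 2 * S := by
    rw [PiLp.inner_apply]
    simp only [RCLike.inner_apply, conj_trivial]
    rw [hsum_split]
    have h1 : v i0 * ones i0 = S := by
      rw [hv, hones]; simp [i0, ← hs, ← hS]
    have h2 : ∑ j ∈ s, v j * ones j = S := by
      rw [hS]
      refine Finset.sum_congr rfl fun j hj => ?_
      rw [hv, hones]
      simp [(hmem j).1 hj]
    rw [mul_comm (ones i0), Finset.sum_congr rfl (fun j _ => mul_comm (ones j) (v j)), h1, h2]; ring
  -- norms
  have hnones : ‖ones‖ = Real.sqrt C := by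
    rw [EuclideanSpace.norm_eq]
    congr 1
    simp [hones]
  have hnv : ‖v‖ = Real.sqrt (S ^ 2 + Q) := by
    rw [EuclideanSpace.norm_eq]
    congr 1
    have : ∀ j : Fin C, ‖v j‖ ^ 2 = (v j) ^ 2 := fun j => sq_abs (v j)
    simp only [this]
    rw [hsum_split]
    congr 1
    · rw [hv]; simp [i0, ← hs, ← hS]
    · rw [hQ]
      refine Finset.sum_congr rfl fun j hj => ?_
      rw [hv]; simp [(hmem j).1 hj]
  set a : ℝ := 2 * S / (Real.sqrt (S ^ 2 + Q) * Real.sqrt C) with ha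
  set b : ℝ := 2 * Real.sqrt n / C with hb
  have hangle : InnerProductGeometry.angle v ones = Real.arccos a := by
    rw [InnerProductGeometry.angle, hinner, hnv, hnones]
  have hSQpos : (0 : ℝ) < S ^ 2 + Q := by positivity
  have hDpos : 0 < Real.sqrt (S ^ 2 + Q) * Real.sqrt C := by positivity
  have hapos : 0 < a := by rw [ha]; positivity
  have hbpos : 0 < b := by
    rw [hb]
    have : 0 < Real.sqrt n := Real.sqrt_pos.2 hn0
    positivity
  have ha2 : a ^ 2 = 4 * S ^ 2 / ((S ^ 2 + Q) * C) := by
    rw [ha, div_pow, mul_pow, mul_pow, Real.sq_sqrt hSQpos.le, Real.sq_sqrt hCpos.le]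
    norm_num
  have hb2 : b ^ 2 = 4 * n / C ^ 2 := by
    rw [hb, div_pow, mul_pow, Real.sq_sqrt hn0.le]
    norm_num
  -- Cauchy–Schwarz identity
  have hkey : ∑ i ∈ s, ∑ j ∈ s, (p i - p j) ^ 2 = 2 * (n * Q - S ^ 2) := by
    have expand : ∀ i : Fin C, ∑ j ∈ s, (p i - p j) ^ 2
        = (s.card : ℝ) * p i ^ 2 - 2 * p i * S + Q := by
      intro i
      have : ∀ j : Fin C, (p i - p j) ^ 2 = p i ^ 2 - 2 * p i * p j + p j ^ 2 := by
        intro j; ring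
      simp only [this]
      rw [Finset.sum_add_distrib, Finset.sum_sub_distrib, Finset.sum_const, ← Finset.mul_sum,
        ← hS, ← hQ, nsmul_eq_mul]
    simp only [expand]
    rw [Finset.sum_add_distrib, Finset.sum_sub_distrib, Finset.sum_const, ← Finset.mul_sum, ← hQ]
    have h3 : ∑ x ∈ s, 2 * p x * S = 2 * S * S := by
      rw [← Finset.sum_mul, ← Finset.mul_sum]
    rw [h3, nsmul_eq_mul, hcard]
    ring
  have hdnn : (0:ℝ) ≤ ∑ i ∈ s, ∑ j ∈ s, (p i - p j) ^ 2 :=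
    Finset.sum_nonneg fun i _ => Finset.sum_nonneg fun j _ => sq_nonneg _
  have hCS : S ^ 2 ≤ n * Q := by nlinarith [hkey, hdnn]
  have hCn : (C : ℝ) = n + 1 := by rw [hn]; ring
  -- equality in Cauchy–Schwarz iff constant
  have hconst_iff : S ^ 2 = n * Q ↔ ∀ i j : Fin C, i.val ≠ 0 → j.val ≠ 0 → p i = p j := by
    constructor
    · intro h
      have hzero : ∑ i ∈ s, ∑ j ∈ s, (p i - p j) ^ 2 = 0 := by rw [hkey]; linarith
      intro i j hi hj
      have h1 := (Finset.sum_eq_zero_iff_of_nonneg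
        (fun i _ => Finset.sum_nonneg fun j _ => sq_nonneg (p i - p j))).1 hzero
        i ((hmem i).2 hi)
      have h2 := (Finset.sum_eq_zero_iff_of_nonneg (fun j _ => sq_nonneg (p i - p j))).1 h1
        j ((hmem j).2 hj)
      have := sq_eq_zero_iff.1 h2
      linarith
    · intro h
      set c : ℝ := p ⟨1, by omega⟩ with hc
      have hpc : ∀ j ∈ s, p j = c := fun j hj => h j _ ((hmem j).1 hj) (by simp)
      have hSc : S = n * c := by
        rw [hS, Finset.sum_congr rfl hpc, Finset.sum_const, nsmul_eq_mul, hcard]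
      have hQc : Q = n * c ^ 2 := by
        rw [hQ, Finset.sum_congr rfl (fun j hj => by rw [hpc j hj]), Finset.sum_const,
          nsmul_eq_mul, hcard]
      rw [hSc, hQc]; ring
  -- the inequality between the cosines
  have hab : a ≤ b := by
    have h2 : a ^ 2 ≤ b ^ 2 := by
      rw [ha2, hb2]
      rw [div_le_div_iff₀ (by positivity) (by positivity), hCn]
      nlinarith [mul_le_mul_of_nonneg_left hCS (by positivity : (0:ℝ) ≤ 4 * (n + 1)),
        mul_le_mul_of_nonneg_left hCS (by positivity : (0:ℝ) ≤ 4 * n * (n + 1)), hn0]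
    calc a = Real.sqrt (a ^ 2) := (Real.sqrt_sq hapos.le).symm
      _ ≤ Real.sqrt (b ^ 2) := Real.sqrt_le_sqrt h2
      _ = b := Real.sqrt_sq hbpos.le
  have hb1 : b ≤ 1 := by
    rw [hb, div_le_one hCpos]
    nlinarith [Real.sq_sqrt hn0.le, sq_nonneg (Real.sqrt n - 1), hCn]
  have ha1 : a ≤ 1 := hab.trans hb1
  constructor
  · rw [hangle]
    exact arccos_anti hab
  · rw [hangle]
    rw [Real.arccos_inj (by linarith : (-1:ℝ) ≤ a) ha1 (by linarith : (-1:ℝ) ≤ b) hb1,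
      ← hconst_iff]
    constructor
    · intro hEq
      have h2 : a ^ 2 = b ^ 2 := by rw [hEq]
      rw [ha2, hb2, div_eq_div_iff (by positivity) (by positivity), hCn] at h2
      have h4 : 4 * (n + 1) * (S ^ 2 - n * Q) = 0 := by linear_combination h2
      have h5 : S ^ 2 - n * Q = 0 := by
        rcases mul_eq_zero.1 h4 with h | h
        · exfalso; nlinarith [hn0]
        · exact h
      linarith
    · intro hEq
      have h2 : a ^ 2 = b ^ 2 := by
        rw [ha2, hb2, div_eq_div_iff (by positivity) (by positivity), hCn]
        linear_combination (4 * (n + 1)) * hEq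
      calc a = Real.sqrt (a ^ 2) := (Real.sqrt_sq hapos.le).symm
        _ = Real.sqrt (b ^ 2) := by rw [h2]
        _ = b := Real.sqrt_sq hbpos.le
end

section
/- Let C ≥ 2, let z : Fin C → ℝ, and let o be the ground-truth index. Then for every index i, the partial derivative of the relative cross-entropy loss L_RCE with respect to z_i (holding the other coordinates fixed) equals (1/ln 2)·(1/C − δ_{io}), where δ_{io} = 1 if i = o and 0 otherwise. In particular, ∂L_RCE/∂z_o = −(1/ln 2)·(C−1)/C, ∂L_RCE/∂z_i = (1/ln 2)·(1/C) for i ≠ o, and these partial derivatives do not depend on z. -/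
/-- Partial derivatives of the relative cross-entropy (RCE) loss:
`∂L_RCE/∂z_i = (1/ln 2)·(1/C − δ_{io})`, a constant independent of `z`. -/
theorem rce_partial_derivatives (C : ℕ) (hC : 2 ≤ C) (z : Fin C → ℝ) (o : Fin C)
    (L : (Fin C → ℝ) → ℝ)
    (hL : ∀ v : Fin C → ℝ, L v =
      - Real.logb 2 (Real.exp (v o) / ∑ j, Real.exp (v j)) -
        (1 / (C : ℝ)) * ∑ c, - Real.logb 2 (Real.exp (v c) / ∑ j, Real.exp (v j))) :
    ∀ i : Fin C,
      HasDerivAt (fun t : ℝ => L (Function.update z i t))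
        ((1 / Real.log 2) * (1 / (C : ℝ) - if i = o then 1 else 0)) (z i) := by
  have hC0 : (C : ℝ) ≠ 0 := by positivity
  have hlog2 : Real.log 2 ≠ 0 := by
    exact ne_of_gt (Real.log_pos (by norm_num))
  have hL' : ∀ v : Fin C → ℝ,
      L v = (1 / Real.log 2) * ((1 / (C : ℝ)) * ∑ c, v c - v o) := by
    intro v
    have hSpos : 0 < ∑ j, Real.exp (v j) :=
      Finset.sum_pos (fun j _ => Real.exp_pos _) ⟨o, Finset.mem_univ o⟩
    have hlog : ∀ c : Fin C, Real.logb 2 (Real.exp (v c) / ∑ j, Real.exp (v j))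
        = (v c - Real.log (∑ j, Real.exp (v j))) / Real.log 2 := by
      intro c
      rw [Real.logb, Real.log_div (Real.exp_ne_zero _) (ne_of_gt hSpos), Real.log_exp]
    rw [hL v]
    simp only [hlog]
    have hsum : ∑ c : Fin C, -((v c - Real.log (∑ j, Real.exp (v j))) / Real.log 2)
        = ((C : ℝ) * Real.log (∑ j, Real.exp (v j)) - ∑ c, v c) / Real.log 2 := by
      simp only [← neg_div]
      rw [← Finset.sum_div]
      simp only [neg_sub]
      rw [Finset.sum_sub_distrib, Finset.sum_const, Finset.card_univ, Fintype.card_fin,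
        nsmul_eq_mul]
    rw [hsum]
    field_simp
    ring
  intro i
  have hupd : ∀ t : ℝ, ∑ c, Function.update z i t c
      = t + ∑ c ∈ (Finset.univ \ {i}), z c := by
    intro t
    exact Finset.sum_update_of_mem (Finset.mem_univ i) z t
  by_cases hio : i = o
  · subst hio
    have h : HasDerivAt (fun t : ℝ =>
        (1 / Real.log 2) * ((1 / (C : ℝ)) * (t + ∑ c ∈ (Finset.univ \ {i}), z c) - t))
        ((1 / Real.log 2) * (1 / (C : ℝ) * 1 - 1)) (z i) := by
      exact ((((hasDerivAt_id (z i)).add_const _).const_mul _).sub (hasDerivAt_id _)).const_mul _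
    simp only [mul_one] at h
    have heq : (fun t : ℝ => L (Function.update z i t)) =
        (fun t : ℝ =>
          (1 / Real.log 2) * ((1 / (C : ℝ)) * (t + ∑ c ∈ (Finset.univ \ {i}), z c) - t)) := by
      funext t
      rw [hL', hupd, Function.update_self]
    rw [heq]
    simpa using h
  · have h : HasDerivAt (fun t : ℝ =>
        (1 / Real.log 2) * ((1 / (C : ℝ)) * (t + ∑ c ∈ (Finset.univ \ {i}), z c) - z o))
        ((1 / Real.log 2) * (1 / (C : ℝ) * 1)) (z i) := by
      exact ((((hasDerivAt_id (z i)).add_const _).const_mul _).sub_const _).const_mul _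
    simp only [mul_one] at h
    have heq : (fun t : ℝ => L (Function.update z i t)) =
        (fun t : ℝ =>
          (1 / Real.log 2) * ((1 / (C : ℝ)) * (t + ∑ c ∈ (Finset.univ \ {i}), z c) - z o)) := by
      funext t
      rw [hL', hupd, Function.update_of_ne (Ne.symm hio)]
    rw [heq]
    simpa [hio] using h
end

section
/- Let C ≥ 2, let z : Fin C → ℝ be a fixed logit vector, and let o be the ground-truth index. For T > 0 write p_i(T) = exp(z_i/T)/Σ_j exp(z_j/T) and let ∂L_TCE/∂z_i (z; T) = (1/(T·ln 2))·(p_i(T) − δ_{io}) be the partial derivative of the TCE loss with respect to z_i. Then for every index i, T·(∂L_TCE/∂z_i)(z; T) tends to (1/ln 2)·(1/C − δ_{io}) as T → +∞, which is exactly the partial derivative ∂L_RCE/∂z_i of the RCE loss. -/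
/-- Proposition 4 (quantitative core): the rescaled TCE partial derivatives
`T·∂L_TCE/∂z_i (z;T) = (1/ln 2)·(p_i(T) − δ_{io})` tend, as `T → +∞`, to
`(1/ln 2)·(1/C − δ_{io})`, which is exactly the partial derivative of the RCE loss. -/
theorem tce_rescaled_gradient_tendsto_rce (C : ℕ) (hC : 2 ≤ C) (z : Fin C → ℝ) (o : Fin C)
    (p : Fin C → ℝ → ℝ)
    (hp : ∀ (i : Fin C) (T : ℝ), p i T = Real.exp (z i / T) / ∑ j, Real.exp (z j / T))
    (dTCE : Fin C → ℝ → ℝ)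
    (hd : ∀ (i : Fin C) (T : ℝ),
      dTCE i T = (1 / (T * Real.log 2)) * (p i T - if i = o then 1 else 0))
    (LRCE : (Fin C → ℝ) → ℝ)
    (hLRCE : ∀ v : Fin C → ℝ, LRCE v =
      - Real.logb 2 (Real.exp (v o) / ∑ j, Real.exp (v j)) +
        (1 / (C : ℝ)) * ∑ c, Real.logb 2 (Real.exp (v c) / ∑ j, Real.exp (v j))) :
    ∀ i : Fin C,
      Filter.Tendsto (fun T : ℝ => T * dTCE i T) Filter.atTop
        (nhds ((1 / Real.log 2) * (1 / (C : ℝ) - if i = o then 1 else 0))) ∧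
      HasDerivAt (fun t : ℝ => LRCE (Function.update z i t))
        ((1 / Real.log 2) * (1 / (C : ℝ) - if i = o then 1 else 0)) (z i) := by
  have hCpos : (0 : ℝ) < C := by positivity
  have hCne : (C : ℝ) ≠ 0 := ne_of_gt hCpos
  have hlog2 : Real.log 2 ≠ 0 := by
    exact ne_of_gt (Real.log_pos (by norm_num))
  intro i
  constructor
  · -- limit part
    have hexp : ∀ j : Fin C, Filter.Tendsto (fun T : ℝ => Real.exp (z j / T))
        Filter.atTop (nhds 1) := by
      intro j
      have h0 : Filter.Tendsto (fun T : ℝ => z j / T) Filter.atTop (nhds 0) :=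
        Filter.Tendsto.div_atTop tendsto_const_nhds Filter.tendsto_id
      simpa [Function.comp_def] using (Real.continuous_exp.continuousAt.tendsto).comp h0
    have hden : Filter.Tendsto (fun T : ℝ => ∑ j, Real.exp (z j / T))
        Filter.atTop (nhds (C : ℝ)) := by
      have := tendsto_finset_sum (Finset.univ : Finset (Fin C))
        (fun j (_ : j ∈ Finset.univ) => hexp j)
      simpa using this
    have hpl : Filter.Tendsto (fun T : ℝ => p i T) Filter.atTop (nhds (1 / (C : ℝ))) := by
      have := (hexp i).div hden hCne
      apply this.congr
      intro T; rw [hp]; rfl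
    have hmain : Filter.Tendsto
        (fun T : ℝ => (1 / Real.log 2) * (p i T - if i = o then 1 else 0))
        Filter.atTop
        (nhds ((1 / Real.log 2) * (1 / (C : ℝ) - if i = o then 1 else 0))) :=
      (hpl.sub_const _).const_mul _
    apply hmain.congr'
    filter_upwards [Filter.eventually_gt_atTop (0 : ℝ)] with T hT
    rw [hd]
    field_simp
  · -- derivative part
    have hS : ∀ v : Fin C → ℝ, (0 : ℝ) < ∑ j, Real.exp (v j) := by
      intro v
      have : Nonempty (Fin C) := ⟨o⟩
      exact Finset.sum_pos (fun j _ => Real.exp_pos _) Finset.univ_nonempty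
    have hsimp : ∀ v : Fin C → ℝ,
        LRCE v = (1 / Real.log 2) * ((1 / (C : ℝ)) * (∑ c, v c) - v o) := by
      intro v
      set S := ∑ j, Real.exp (v j) with hSdef
      have hSpos := hS v
      have hlb : ∀ c : Fin C, Real.logb 2 (Real.exp (v c) / S)
          = (v c - Real.log S) / Real.log 2 := by
        intro c
        rw [Real.logb, Real.log_div (Real.exp_ne_zero _) (ne_of_gt hSpos), Real.log_exp]
      rw [hLRCE]
      simp only [← hSdef, hlb]
      rw [← Finset.sum_div, Finset.sum_sub_distrib]
      simp only [Finset.sum_const, Finset.card_univ, Fintype.card_fin, nsmul_eq_mul]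
      field_simp
      ring
    have hfun : (fun t : ℝ => LRCE (Function.update z i t))
        = fun t : ℝ => (1 / Real.log 2) *
            ((1 / (C : ℝ)) * (t + ∑ c ∈ Finset.univ \ {i}, z c)
              - if o = i then t else z o) := by
      funext t
      rw [hsimp]
      congr 1
      congr 1
      · congr 1
        rw [Finset.sum_update_of_mem (Finset.mem_univ i)]
      · rw [Function.update_apply]
    rw [hfun]
    by_cases hio : i = o
    · subst hio
      simp only [if_pos rfl, if_pos rfl]
      have h1 : HasDerivAt (fun t : ℝ =>
          (1 / (C : ℝ)) * (t + ∑ c ∈ Finset.univ \ {i}, z c) - t)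
          (1 / (C : ℝ) * 1 - 1) (z i) :=
        (((hasDerivAt_id (z i)).add_const _).const_mul _).sub (hasDerivAt_id (z i))
      simpa using h1.const_mul (1 / Real.log 2)
    · have hoi : ¬ (o = i) := fun h => hio h.symm
      simp only [if_neg hio, if_neg hoi]
      have h1 : HasDerivAt (fun t : ℝ =>
          (1 / (C : ℝ)) * (t + ∑ c ∈ Finset.univ \ {i}, z c) - z o)
          (1 / (C : ℝ) * 1) (z i) :=
        (((hasDerivAt_id (z i)).add_const _).const_mul _).sub_const _
      have h2 := h1.const_mul (1 / Real.log 2)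
      rw [show (1 / Real.log 2 * (1 / (C : ℝ) - 0)) = 1 / Real.log 2 * (1 / (C : ℝ) * 1) by ring]
      exact h2
end
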